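/- arXiv:1802.07760 — 2 statements merged into one kernel-verified Lean document; each statement's English description precedes it below -/
import Mathlib

section
/- Power of the Cayley identity (the square case m = n of the Bernstein–Sato polynomial of powers of the ideal of maximal minors): for all positive integers n, d and every natural number s, det(∂X)^{d}·(det X)^{d(s+1)} = (∏_{i=1}^{n} ∏_{j=0}^{d-1} (d·s + i + j))·(det X)^{d·s} in ℚ[x_{ij}]. -/
/-!
The operators `∂_{ij}` commute, so `p ↦ p(∂)` is an algebra map and `det(∂X)` expands like a
determinant. For distinct rows `r₁, …, r_k` and arbitrary columns `c₁, …, c_k` one shows, by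
induction on `k`,
  `det(∂_{r_i c_j}) (det X)^{m+1} = (m+1)⋯(m+k) (det X)^m det Y`,
where `Y` is `X` with row `r_i` replaced by the unit vector `e_{c_i}`. Expanding along the first row
and applying the Leibniz rule gives two sums. Where the derivative falls on `det Y`, the `k + 1`
terms are equal by alternation. Where it falls on `(det X)^m`, the sum is a Laplace expansion of a
minor of `adj X`, which Jacobi's complementary minor theorem identifies with `det X · det Y`. For
`k = n` we get `Y = 1` and Cayley's identity `det(∂X) (det X)^{m+1} = (m+1)⋯(m+n) (det X)^m`,
which is applied `d` times.
-/

open MvPolynomial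

/-- The partial-derivative operator `∂_{ij}` as a linear endomorphism of
`ℚ[x_{ij} : 1 ≤ i,j ≤ n]`. -/
noncomputable def pd1 {n : ℕ} (v : Fin n × Fin n) :
    Module.End ℚ (MvPolynomial (Fin n × Fin n) ℚ) :=
  (pderiv v).toLinearMap

/-- The operator `det(∂X) = Σ_{σ ∈ S_n} sgn(σ) ∏_i ∂_{i,σ(i)}` (the operators
`∂_{i,σ(i)}` pairwise commute, so the order of composition is immaterial). -/
noncomputable def detOp1 (n : ℕ) : Module.End ℚ (MvPolynomial (Fin n × Fin n) ℚ) :=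
  ∑ σ : Equiv.Perm (Fin n),
    (Equiv.Perm.sign σ : ℤ) • (List.ofFn fun i => pd1 (i, σ i)).prod

/-- The generic `n × n` matrix `X = (x_{ij})` over `ℚ[x_{ij}]`. -/
noncomputable def Xmat1 (n : ℕ) :
    Matrix (Fin n) (Fin n) (MvPolynomial (Fin n × Fin n) ℚ) :=
  fun i j => X (i, j)

namespace MvPolynomial

variable {σ R : Type*} [CommRing R]

theorem pderiv_comm (i j : σ) (p : MvPolynomial σ R) :
    pderiv i (pderiv j p) = pderiv j (pderiv i p) := by
  classical
  have h : ⁅pderiv i, pderiv j⁆ = (0 : Derivation R (MvPolynomial σ R) (MvPolynomial σ R)) :=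
    derivation_ext fun k => by
      rw [Derivation.commutator_apply]; simp [pderiv_X, Pi.single_apply, apply_ite]
  simpa [Derivation.commutator_apply, sub_eq_zero] using congr($h p)

open scoped IsMulCommutative in
/-- `diffOp p` is `p(∂)`, obtained by substituting `∂_i` for `X_i`: an algebra map because the
`∂_i` commute. -/
noncomputable def diffOp : MvPolynomial σ R →ₐ[R] Module.End R (MvPolynomial σ R) :=
  let s := Set.range fun i => (pderiv i : Derivation R (MvPolynomial σ R) _).toLinearMap
  have : IsMulCommutative (Algebra.adjoin R s) := Algebra.isMulCommutative_adjoin R <| by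
    rintro _ ⟨i, rfl⟩ _ ⟨j, rfl⟩
    exact LinearMap.ext (pderiv_comm i j)
  (Algebra.adjoin R s).val.comp
    (aeval fun i => (⟨_, Algebra.subset_adjoin ⟨i, rfl⟩⟩ : Algebra.adjoin R s))

@[simp]
theorem diffOp_X (i : σ) : diffOp (X i : MvPolynomial σ R) = (pderiv i).toLinearMap := by
  simp [diffOp]

end MvPolynomial

namespace Matrix

variable {ι R : Type*} [DecidableEq ι] [CommRing R]

/-- `M` with row `r i` replaced by the unit vector `e_{c i}` for each `i`. For injective `r` and `c`
its determinant is, up to sign, the minor of `M` on the rows outside `r` and the columns outside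
`c`. -/
def replaceRows (M : Matrix ι ι R) : {k : ℕ} → (Fin k → ι) → (Fin k → ι) → Matrix ι ι R
  | 0, _, _ => M
  | _ + 1, r, c => (replaceRows M (Fin.tail r) (Fin.tail c)).updateRow (r 0) (Pi.single (c 0) 1)

variable (M : Matrix ι ι R) {k : ℕ} {r : Fin k → ι} (c : Fin k → ι)

theorem replaceRows_apply_of_injective (hr : Function.Injective r) (i : Fin k) :
    M.replaceRows r c (r i) = Pi.single (c i) 1 := by
  induction k with
  | zero => exact i.elim0
  | succ k ih =>
    cases i using Fin.cases with
    | zero => exact updateRow_self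
    | succ i =>
      rw [replaceRows, updateRow_ne (hr.ne (Fin.succ_ne_zero i))]
      exact ih (Fin.tail c) (hr.comp (Fin.succ_injective _)) i

theorem replaceRows_apply_of_notMem {a : ι} (ha : a ∉ Set.range r) :
    M.replaceRows r c a = M a := by
  induction k with
  | zero => rfl
  | succ k ih =>
    rw [replaceRows, updateRow_ne fun h => ha ⟨0, h.symm⟩]
    exact ih (Fin.tail c) fun ⟨i, hi⟩ => ha ⟨i.succ, hi⟩

theorem replaceRows_equiv_self (e : Fin k ≃ ι) : M.replaceRows e e = 1 := by
  ext a l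
  obtain ⟨i, rfl⟩ := e.surjective a
  rw [replaceRows_apply_of_injective _ _ e.injective, one_apply, Pi.single_apply]
  exact if_congr eq_comm rfl rfl

variable [Fintype ι]

theorem adjugate_replaceRows_tail (r : Fin (k + 1) → ι) (c : Fin k → ι) (l : ι) :
    (M.replaceRows (Fin.tail r) c).adjugate l (r 0) = (M.replaceRows r (Fin.cons l c)).det := by
  rw [adjugate_apply]
  simp [replaceRows]

theorem det_replaceRows_comp_perm (hr : Function.Injective r) (τ : Equiv.Perm (Fin k)) :
    (M.replaceRows r (c ∘ τ)).det = Equiv.Perm.sign τ * (M.replaceRows r c).det := by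
  let τ' := τ.extendDomain (Equiv.ofInjective r hr)
  have h : M.replaceRows r (c ∘ τ) = (M.replaceRows r c).submatrix τ' id := by
    ext a j
    by_cases ha : a ∈ Set.range r
    · obtain ⟨i, rfl⟩ := ha
      have : τ' (r i) = r (τ i) := τ.extendDomain_apply_image (Equiv.ofInjective r hr) i
      simp only [submatrix_apply, id, this, replaceRows_apply_of_injective _ _ hr]
      rfl
    · have : τ' a = a := τ.extendDomain_apply_not_subtype _ ha
      simp only [submatrix_apply, id, this, replaceRows_apply_of_notMem _ _ ha]
  rw [h, det_permute, Equiv.Perm.sign_extendDomain]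

theorem sum_det_replaceRows_cons {r : Fin (k + 1) → ι} (hr : Function.Injective r)
    (c : Fin (k + 1) → ι) :
    ∑ j : Fin (k + 1), (-1) ^ (j : ℕ) * (M.replaceRows r (Fin.cons (c j) (c ∘ j.succAbove))).det =
      (k + 1) * (M.replaceRows r c).det := by
  have hcycle (j : Fin (k + 1)) : Fin.cons (c j) (c ∘ j.succAbove) = c ∘ j.cycleRange.symm := by
    ext i; cases i using Fin.cases <;> simp
  simp only [hcycle, det_replaceRows_comp_perm _ _ hr, Equiv.Perm.sign_symm, Fin.sign_cycleRange]
  simp [← mul_assoc, ← mul_pow]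

theorem det_eq_det_submatrix_mul_pow {Z : Matrix ι ι R} (hr : Function.Injective r) (d : R)
    (hZ : ∀ a ∉ Set.range r, ∀ j, Z a j = if a = j then d else 0) :
    Z.det = (Z.submatrix r r).det * d ^ (Fintype.card ι - k) := by
  rw [Z.twoBlockTriangular_det (· ∈ Set.range r) fun a ha b hb => by
    rw [hZ a ha, if_neg (by rintro rfl; exact ha hb)]]
  congr 1
  · convert det_submatrix_equiv_self (Equiv.ofInjective r hr).symm (Z.submatrix r r)
    ext ⟨_, i, rfl⟩ ⟨_, j, rfl⟩
    simp [toSquareBlockProp_def]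
  · have hblock : Z.toSquareBlockProp (· ∉ Set.range r) = d • 1 := by
      ext ⟨a, ha⟩ ⟨b, hb⟩
      simp [toSquareBlockProp_def, hZ a ha, one_apply, Subtype.ext_iff]
    rw [hblock, det_smul, det_one, mul_one, Fintype.card_subtype_compl,
      Fintype.card_of_subtype (Finset.univ.image r) (by simp),
      Finset.card_image_of_injective _ hr, Finset.card_univ, Fintype.card_fin]

section IsDomain
variable [IsDomain R] {M}

/-- Jacobi's complementary minor theorem. The factor `det M` on the left avoids the exponent
`k - 1`. -/
theorem det_mul_det_submatrix_adjugate (hM : M.det ≠ 0) (hr : Function.Injective r) :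
    M.det * (M.adjugate.submatrix c r).det = M.det ^ k * (M.replaceRows r c).det := by
  set Z := M.replaceRows r c * M.adjugate
  have hZ_range : Z.submatrix r r = M.adjugate.submatrix c r := by
    ext i j
    simp [Z, mul_apply, replaceRows_apply_of_injective _ _ hr, Pi.single_apply]
  have hZ_compl (a : ι) (ha : a ∉ Set.range r) (j : ι) : Z a j = if a = j then M.det else 0 := by
    rw [show Z a j = (M * M.adjugate) a j by
      simp only [Z, mul_apply, replaceRows_apply_of_notMem _ _ ha], mul_adjugate]
    simp [one_apply]
  have hdet := det_eq_det_submatrix_mul_pow hr M.det hZ_compl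
  rw [hZ_range, det_mul] at hdet
  have hdet_adj : M.det * M.adjugate.det = M.det ^ Fintype.card ι := by
    rw [← det_mul, mul_adjugate, det_smul, det_one, mul_one]
  have hcard : M.det ^ Fintype.card ι = M.det ^ k * M.det ^ (Fintype.card ι - k) := by
    have := Fintype.card_le_of_injective r hr
    rw [Fintype.card_fin] at this
    rw [← pow_add, Nat.add_sub_cancel' this]
  refine mul_left_cancel₀ (pow_ne_zero (Fintype.card ι - k) hM) ?_
  linear_combination (-M.det) * hdet + (M.replaceRows r c).det * hdet_adj +
    (M.replaceRows r c).det * hcard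

theorem sum_adjugate_mul_det_replaceRows_tail (hM : M.det ≠ 0) {r : Fin (k + 1) → ι}
    (hr : Function.Injective r) (c : Fin (k + 1) → ι) :
    ∑ j : Fin (k + 1), (-1) ^ (j : ℕ) * M.adjugate (c j) (r 0) *
        (M.replaceRows (Fin.tail r) (c ∘ j.succAbove)).det =
      M.det * (M.replaceRows r c).det := by
  have hr' : Function.Injective (Fin.tail r) := hr.comp (Fin.succ_injective _)
  refine mul_left_cancel₀ (pow_ne_zero k hM) ?_
  calc M.det ^ k * _
      = M.det * ∑ j : Fin (k + 1), (-1) ^ (j : ℕ) * M.adjugate (c j) (r 0) *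
          (M.adjugate.submatrix (c ∘ j.succAbove) (Fin.tail r)).det := by
        rw [Finset.mul_sum, Finset.mul_sum]
        refine Finset.sum_congr rfl fun j _ => ?_
        linear_combination -(-1) ^ (j : ℕ) * M.adjugate (c j) (r 0) *
          det_mul_det_submatrix_adjugate (c ∘ j.succAbove) hM hr'
    _ = M.det * (M.adjugate.submatrix c r).det := by rw [det_succ_column_zero]; rfl
    _ = M.det ^ k * (M.det * (M.replaceRows r c).det) := by
        rw [det_mul_det_submatrix_adjugate _ hM hr, pow_succ]
        ring

end IsDomain

end Matrix

namespace MvPolynomial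

open Matrix

variable {σ ι R : Type*} [CommRing R]

local notation "𝕏" => mvPolynomialX ι ι R

theorem diffOp_det_submatrix_apply {k : ℕ} (r c : Fin (k + 1) → ι) (f : MvPolynomial (ι × ι) R) :
    diffOp (det (submatrix 𝕏 r c)) f =
      ∑ j : Fin (k + 1), (-1) ^ (j : ℕ) * pderiv (r 0, c j)
        (diffOp (det (submatrix 𝕏 (Fin.tail r) (c ∘ j.succAbove))) f) := by
  rw [det_succ_row_zero, map_sum, LinearMap.sum_apply]
  refine Finset.sum_congr rfl fun j _ => ?_
  rcases Nat.even_or_odd j with h | h <;> simp [submatrix_submatrix, h.neg_one_pow] <;> rfl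

variable [Fintype ι] [DecidableEq ι]

theorem pderiv_det_eq_zero {v : σ} {M : Matrix ι ι (MvPolynomial σ R)}
    (h : ∀ i j, pderiv v (M i j) = 0) : pderiv v M.det = 0 := by
  have hprod (τ : Equiv.Perm ι) : pderiv v (∏ i, M (τ i) i) = 0 :=
    Finset.prod_induction _ (pderiv v · = 0)
      (fun _ _ ha hb => by simp only [pderiv_mul, ha, hb, mul_zero, zero_mul, add_zero])
      pderiv_one fun i _ => h _ _
  simp [det_apply, Units.smul_def, hprod]

theorem pderiv_det_of_row_eq_X {M : Matrix ι ι (MvPolynomial (ι × ι) R)} {a : ι} (l : ι)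
    (hrow : ∀ j, M a j = X (a, j)) (hother : ∀ i, i ≠ a → ∀ j, pderiv (a, l) (M i j) = 0) :
    pderiv (a, l) M.det = M.adjugate l a := by
  have hadj (j : ι) : pderiv (a, l) (M.adjugate j a) = 0 := by
    rw [adjugate_apply]
    refine pderiv_det_eq_zero fun i j' => ?_
    rcases eq_or_ne i a with rfl | hi
    · rw [updateRow_self, Pi.single_apply]
      split_ifs <;> simp
    · rw [updateRow_ne hi, hother i hi]
  rw [det_eq_sum_mul_adjugate_row M a, map_sum]
  simp [hrow, hadj, pderiv_X, Pi.single_apply]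

theorem pderiv_det_mvPolynomialX (a l : ι) :
    pderiv (a, l) (det 𝕏) = adjugate 𝕏 l a :=
  pderiv_det_of_row_eq_X l (fun _ => rfl) fun _ hi _ => pderiv_X_of_ne (by simp [hi])

theorem pderiv_det_replaceRows_tail {k : ℕ} {r : Fin (k + 1) → ι} (hr : Function.Injective r)
    (c : Fin k → ι) (l : ι) :
    pderiv (r 0, l) (det (replaceRows 𝕏 (Fin.tail r) c)) =
      det (replaceRows 𝕏 r (Fin.cons l c)) := by
  have hr' : Function.Injective (Fin.tail r) := hr.comp (Fin.succ_injective _)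
  have h0 : r 0 ∉ Set.range (Fin.tail r) := fun ⟨i, hi⟩ => Fin.succ_ne_zero i (hr hi)
  rw [← adjugate_replaceRows_tail]
  refine pderiv_det_of_row_eq_X l (fun j => by rw [replaceRows_apply_of_notMem _ _ h0]; rfl)
    fun i hi j => ?_
  by_cases hi' : i ∈ Set.range (Fin.tail r)
  · obtain ⟨i, rfl⟩ := hi'
    rw [replaceRows_apply_of_injective _ _ hr', Pi.single_apply]
    split_ifs <;> simp
  · rw [replaceRows_apply_of_notMem _ _ hi']
    exact pderiv_X_of_ne (by simp [hi])

variable [IsDomain R]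

theorem diffOp_det_submatrix_apply_det_pow (m : ℕ) {k : ℕ} (r c : Fin k → ι)
    (hr : Function.Injective r) :
    diffOp (det (submatrix 𝕏 r c)) (det 𝕏 ^ (m + 1)) =
      (∏ i ∈ Finset.Icc 1 k, ((m : R) + i)) •
        (det 𝕏 ^ m * det (replaceRows 𝕏 r c)) := by
  induction k with
  | zero => simp [replaceRows, pow_succ]
  | succ k ih =>
    have hr0 : det 𝕏 ≠ 0 := det_mvPolynomialX_ne_zero ι R
    set P := ∏ i ∈ Finset.Icc 1 k, ((m : R) + i)
    calc diffOp (det (submatrix 𝕏 r c)) (det 𝕏 ^ (m + 1))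
        = ∑ j : Fin (k + 1), (-1) ^ (j : ℕ) * pderiv (r 0, c j)
            (P • (det 𝕏 ^ m * det (replaceRows 𝕏 (Fin.tail r) (c ∘ j.succAbove)))) := by
          rw [diffOp_det_submatrix_apply]
          simp only [ih (Fin.tail r) _ (hr.comp (Fin.succ_injective _))]
      _ = P • (m * det 𝕏 ^ (m - 1) * ∑ j : Fin (k + 1), (-1) ^ (j : ℕ) * adjugate 𝕏 (c j) (r 0) *
              det (replaceRows 𝕏 (Fin.tail r) (c ∘ j.succAbove)) +
            det 𝕏 ^ m * ∑ j : Fin (k + 1), (-1) ^ (j : ℕ) *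
              det (replaceRows 𝕏 r (Fin.cons (c j) (c ∘ j.succAbove)))) := by
          simp only [Finset.mul_sum, ← Finset.sum_add_distrib, Finset.smul_sum]
          refine Finset.sum_congr rfl fun j _ => ?_
          rw [smul_eq_C_mul, smul_eq_C_mul, pderiv_C_mul, pderiv_mul, pderiv_pow,
            pderiv_det_mvPolynomialX, pderiv_det_replaceRows_tail hr]
          ring
      _ = P • (m * det 𝕏 ^ (m - 1) * (det 𝕏 * det (replaceRows 𝕏 r c)) +
            det 𝕏 ^ m * ((k + 1) * det (replaceRows 𝕏 r c))) := by
          rw [sum_adjugate_mul_det_replaceRows_tail hr0 hr, sum_det_replaceRows_cons _ hr]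
      _ = _ := by
          have hm : (m : MvPolynomial (ι × ι) R) * det 𝕏 ^ (m - 1) * det 𝕏 = m * det 𝕏 ^ m := by
            cases m <;> simp [pow_succ, mul_assoc]
          rw [Finset.prod_Icc_succ_top (by omega), smul_eq_C_mul, smul_eq_C_mul, map_mul]
          simp only [map_add, map_natCast]
          push_cast
          linear_combination C P * det (replaceRows 𝕏 r c) * hm

theorem diffOp_det_apply_det_pow (m : ℕ) :
    diffOp (det 𝕏) (det 𝕏 ^ (m + 1)) =
      (∏ i ∈ Finset.Icc 1 (Fintype.card ι), ((m : R) + i)) • det 𝕏 ^ m := by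
  let e := (Fintype.equivFin ι).symm
  have h := diffOp_det_submatrix_apply_det_pow (R := R) m e e e.injective
  rwa [det_submatrix_equiv_self, replaceRows_equiv_self, det_one, mul_one] at h

end MvPolynomial

theorem Xmat1_eq_mvPolynomialX (n : ℕ) : Xmat1 n = Matrix.mvPolynomialX (Fin n) (Fin n) ℚ := rfl

theorem detOp1_eq_diffOp_det (n : ℕ) : detOp1 n = diffOp (Xmat1 n).det := by
  rw [← Matrix.det_transpose, Matrix.det_apply, map_sum, detOp1]
  refine Finset.sum_congr rfl fun σ _ => ?_
  rw [Units.smul_def, map_zsmul, ← List.prod_ofFn, map_list_prod, List.map_ofFn]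
  congr 3
  funext i
  exact (diffOp_X (R := ℚ) _).symm

theorem detOp1_apply_det_pow (n m : ℕ) :
    detOp1 n ((Xmat1 n).det ^ (m + 1)) =
      (∏ i ∈ Finset.Icc 1 n, ((m : ℚ) + i)) • (Xmat1 n).det ^ m := by
  rw [detOp1_eq_diffOp_det, Xmat1_eq_mvPolynomialX]
  simpa using diffOp_det_apply_det_pow (ι := Fin n) (R := ℚ) m

theorem detOp1_pow_apply_det_pow (n c N : ℕ) :
    (detOp1 n ^ c) ((Xmat1 n).det ^ (N + c)) =
      (∏ i ∈ Finset.Icc 1 n, ∏ j ∈ Finset.range c, ((N : ℚ) + i + j)) • (Xmat1 n).det ^ N := by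
  induction c with
  | zero => simp
  | succ c ih =>
    rw [pow_succ, Module.End.mul_apply, ← add_assoc, detOp1_apply_det_pow, map_smul, ih,
      smul_smul, ← Finset.prod_mul_distrib]
    congr 2 with i
    rw [Finset.prod_range_succ]
    push_cast
    ring

theorem cayley_identity_pow_general (n d : ℕ) (s : ℕ) :
    (detOp1 n ^ d) ((Xmat1 n).det ^ (d * (s + 1))) =
      (∏ i ∈ Finset.Icc 1 n, ∏ j ∈ Finset.range d, ((d : ℚ) * s + i + j)) •
        (Xmat1 n).det ^ (d * s) := by
  rw [mul_add_one, detOp1_pow_apply_det_pow]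
  push_cast
  rfl

/-- Power of the Cayley identity:
`det(∂X)^d·(det X)^{d(s+1)} = (∏_{i=1}^{n} ∏_{j=0}^{d-1} (d·s+i+j))·(det X)^{d·s}`. -/
theorem cayley_identity_pow (n d : ℕ) (hn : 0 < n) (hd : 0 < d) (s : ℕ) :
    (detOp1 n ^ d) ((Xmat1 n).det ^ (d * (s + 1))) =
      (∏ i ∈ Finset.Icc 1 n, ∏ j ∈ Finset.range d, ((d : ℚ) * s + i + j)) •
        (Xmat1 n).det ^ (d * s) :=
  cayley_identity_pow_general n d s
end

section
/- Second factor in the multiplicity-one decomposition of the b-function of the binary cubic discriminant (a local Bernstein–Sato-type equation): there exists a nonzero constant c, independent of s, such that for every natural number s, (3∂₁∂₃ - ∂₂²)·f^{s+1} = c·(s+1)(6s+7)·(x₀x₂ - x₁²)·f^{s}. -/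
open MvPolynomial

/-- The partial-derivative operator `∂ᵢ` as a linear endomorphism of `ℂ[x₀,x₁,x₂,x₃]`. -/
noncomputable def pd12 (i : Fin 4) : Module.End ℂ (MvPolynomial (Fin 4) ℂ) :=
  (pderiv i).toLinearMap

/-- The discriminant of the binary cubic form:
`f = 3x₁²x₂² - 4x₀x₂³ - 4x₁³x₃ - x₀²x₃² + 6x₀x₁x₂x₃`. -/
noncomputable def disc12 : MvPolynomial (Fin 4) ℂ :=
  3 * X 1 ^ 2 * X 2 ^ 2 - 4 * X 0 * X 2 ^ 3 - 4 * X 1 ^ 3 * X 3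
    - X 0 ^ 2 * X 3 ^ 2 + 6 * X 0 * X 1 * X 2 * X 3

@[simp] lemma pderiv_ofNat' {i : Fin 4} (n : ℕ) [n.AtLeastTwo] :
    pderiv i (no_index (OfNat.ofNat n) : MvPolynomial (Fin 4) ℂ) = 0 := by
  have : (OfNat.ofNat n : MvPolynomial (Fin 4) ℂ) = C ((n : ℕ) : ℂ) := by
    rw [C_eq_coe_nat]; norm_cast
  rw [this, pderiv_C]

lemma hd1 : pderiv 1 disc12 = 6*X 1*X 2^2 - 12*X 1^2*X 3 + 6*X 0*X 2*X 3 := by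
  simp [disc12, pderiv_X_self, pderiv_X_of_ne]; ring

lemma hd2 : pderiv 2 disc12 = 6*X 1^2*X 2 - 12*X 0*X 2^2 + 6*X 0*X 1*X 3 := by
  simp [disc12, pderiv_X_self, pderiv_X_of_ne]; ring

lemma hd3 : pderiv 3 disc12 = -4*X 1^3 - 2*X 0^2*X 3 + 6*X 0*X 1*X 2 := by
  simp [disc12, pderiv_X_self, pderiv_X_of_ne]; ring

lemma keyp (i : Fin 4) (n : ℕ) :
    pderiv i (disc12 ^ (n+1)) = C ((n:ℂ)+1) * (disc12^n * pderiv i disc12) := by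
  rw [Derivation.leibniz_pow]
  simp only [Nat.add_sub_cancel]
  rw [nsmul_eq_mul, ← C_eq_coe_nat]
  push_cast
  rw [smul_eq_mul]

/-- Second factor in the multiplicity-one decomposition of the b-function of the
binary cubic discriminant: there is a nonzero constant `c`, independent of `s`,
with `(3∂₁∂₃ - ∂₂²)·f^{s+1} = c·(s+1)(6s+7)·(x₀x₂ - x₁²)·f^s` for all `s ∈ ℕ`. -/
theorem binary_cubic_second_factor :
    ∃ c : ℂ, c ≠ 0 ∧ ∀ s : ℕ,
      ((3 : ℂ) • (pd12 1 * pd12 3) - pd12 2 * pd12 2) (disc12 ^ (s + 1)) =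
        (c * ((s : ℂ) + 1) * (6 * (s : ℂ) + 7)) •
          ((X 0 * X 2 - X 1 ^ 2) * disc12 ^ s) := by
  refine ⟨6, by norm_num, ?_⟩
  intro s
  simp only [pd12, LinearMap.sub_apply, LinearMap.smul_apply, Module.End.mul_apply,
    Derivation.coeFn_coe]
  match s with
  | 0 =>
    simp only [zero_add, pow_one, pow_zero, mul_one, Nat.cast_zero]
    rw [smul_eq_C_mul, smul_eq_C_mul, hd3, hd2]
    simp [pderiv_mul, pderiv_X_self, pderiv_X_of_ne, map_ofNat]
    ring
  | Nat.succ t =>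
    rw [keyp 3 (t+1), keyp 2 (t+1), pderiv_C_mul, pderiv_C_mul, pderiv_mul, pderiv_mul,
      keyp 1 t, keyp 2 t, smul_eq_C_mul, smul_eq_C_mul, hd1, hd2, hd3, pow_succ]
    simp [pderiv_mul, pderiv_X_self, pderiv_X_of_ne, disc12, map_ofNat]
    ring
end
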